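/- With notation as above, if g = n·a(t₀)·m·k(α,β) ∈ U(2,1) (Iwasawa decomposition with SU(2)-parametrized K₀/M-component), then ∂/∂t A(g·a(t))|_{t=0} = Re(α), ∂/∂τ A(g·n(0,τ))|_{τ=0} = Im(α), ∂/∂x A(g·n(x,0))|_{x=0} = 2Re(β), and ∂/∂y A(g·n(iy,0))|_{y=0} = 2Im(β). -/

import Mathlib

open Matrix Complex

noncomputable section

def Jmat : Matrix (Fin 3) (Fin 3) ℂ := !![0,0,1;0,1,0;1,0,0]

def nmat (z : ℂ) (τ : ℝ) : Matrix (Fin 3) (Fin 3) ℂ :=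
  !![1, (Real.sqrt 2 : ℂ) * z, (τ : ℂ) * I - (normSq z : ℂ);
     0, 1, -(Real.sqrt 2 : ℂ) * starRingEnd ℂ z;
     0, 0, 1]

def amat (t : ℝ) : Matrix (Fin 3) (Fin 3) ℂ :=
  !![(Real.exp (t/2) : ℂ), 0, 0; 0, 1, 0; 0, 0, (Real.exp (-t/2) : ℂ)]

def kmat (α β : ℂ) : Matrix (Fin 3) (Fin 3) ℂ :=
  !![(α+1)/2, β/(Real.sqrt 2 : ℂ), (α-1)/2;
     -(starRingEnd ℂ β)/(Real.sqrt 2 : ℂ), starRingEnd ℂ α, -(starRingEnd ℂ β)/(Real.sqrt 2 : ℂ);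
     (α-1)/2, β/(Real.sqrt 2 : ℂ), (α+1)/2]

def U21 : Set (Matrix (Fin 3) (Fin 3) ℂ) := {g | gᴴ * Jmat * g = Jmat}

def Nset : Set (Matrix (Fin 3) (Fin 3) ℂ) := {x | ∃ z τ, x = nmat z τ}

def K0 : Set (Matrix (Fin 3) (Fin 3) ℂ) := {g | gᴴ * Jmat * g = Jmat ∧ gᴴ * g = 1}

/-- The centralizer M of A in K₀. -/
def Mset : Set (Matrix (Fin 3) (Fin 3) ℂ) := {m | m ∈ K0 ∧ ∀ t : ℝ, m * amat t = amat t * m}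

/-!
Writing `h = n a(A h) k` with `k ∈ K₀`, the bottom row of `n a(t)` is `e^{-t/2} (0, 0, 1)`, so
`e^{-A h}` is the squared norm of the bottom row of `h`. Since `M` fixes the line spanned by
`(0, 0, 1)` as a row vector, the bottom row of `g` is `c` times the unit bottom row `v` of
`k(α, β)`, with `c ≠ 0`. Hence for a curve `X` through `1` with `X'(0) = Y` in the Lie algebra,
`d/ds A(g X(s))` at `0` equals `-2 Re ⟨v Y, v⟩`; evaluating this pairing for the generator of `𝔞`
and the elements of `𝔫` gives the four formulas.
-/

open ComplexConjugate

theorem mul_mem_U21 {a b : Matrix (Fin 3) (Fin 3) ℂ} (ha : a ∈ U21) (hb : b ∈ U21) :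
    a * b ∈ U21 := by
  change (a * b)ᴴ * Jmat * (a * b) = Jmat
  rw [conjTranspose_mul, show bᴴ * aᴴ * Jmat * (a * b) = bᴴ * (aᴴ * Jmat * a) * b by
    simp only [Matrix.mul_assoc], ha, hb]

theorem amat_mem_U21 (t : ℝ) : amat t ∈ U21 := by
  change _ = _
  ext i j
  fin_cases i <;> fin_cases j <;>
    simp [amat, Jmat, mul_apply, Fin.sum_univ_three, -ofReal_exp, ← ofReal_mul, ← Real.exp_add] <;>
    ring_nf

theorem nmat_mem_U21 (z : ℂ) (τ : ℝ) : nmat z τ ∈ U21 := by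
  change _ = _
  ext i j
  fin_cases i <;> fin_cases j <;>
    simp [nmat, Jmat, mul_apply, Fin.sum_univ_three]
  have hsqrt : (√2 : ℂ) * √2 = 2 := by exact_mod_cast Real.mul_self_sqrt zero_le_two
  linear_combination (z * conj z) * hsqrt + 2 * mul_conj z

theorem amat_zero : amat 0 = 1 := by
  ext i j; fin_cases i <;> fin_cases j <;> simp [amat]

theorem nmat_zero_zero : nmat 0 0 = 1 := by
  ext i j; fin_cases i <;> fin_cases j <;> simp [nmat]

theorem sum_normSq_apply_of_conjTranspose_mul_self_eq_one {ι : Type*} [Fintype ι]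
    [DecidableEq ι] {k : Matrix ι ι ℂ} (hk : kᴴ * k = 1) (i : ι) :
    ∑ j, normSq (k i j) = 1 := by
  have h := congrFun (congrFun (mul_eq_one_comm.mp hk : k * kᴴ = 1) i) i
  simp only [mul_apply, conjTranspose_apply, one_apply_eq, star_def, mul_conj] at h
  exact_mod_cast h

theorem nmat_mul_amat_mul_apply_two (z : ℂ) (τ t : ℝ) (k : Matrix (Fin 3) (Fin 3) ℂ)
    (j : Fin 3) : (nmat z τ * amat t * k) 2 j = Real.exp (-t / 2) * k 2 j := by
  simp [mul_apply, Fin.sum_univ_three, nmat, amat, -ofReal_exp]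

theorem AA_eq_neg_log_sum_normSq (AA : Matrix (Fin 3) (Fin 3) ℂ → ℝ)
    (κ : Matrix (Fin 3) (Fin 3) ℂ → Matrix (Fin 3) (Fin 3) ℂ)
    (hdec : ∀ g ∈ U21, κ g ∈ K0 ∧ ∃ n ∈ Nset, g = n * amat (AA g) * κ g)
    {h : Matrix (Fin 3) (Fin 3) ℂ} (hh : h ∈ U21) :
    AA h = -Real.log (∑ j, normSq (h 2 j)) := by
  obtain ⟨hk, _, ⟨z, τ, rfl⟩, hnak⟩ := hdec h hh
  have hrow (j : Fin 3) : h 2 j = Real.exp (-AA h / 2) * κ h 2 j := by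
    rw [← nmat_mul_amat_mul_apply_two z τ, ← hnak]
  simp_rw [hrow, normSq_mul, normSq_ofReal, ← Finset.mul_sum,
    sum_normSq_apply_of_conjTranspose_mul_self_eq_one hk.2, mul_one, ← Real.exp_add, add_halves,
    Real.log_exp, neg_neg]

theorem Mset_apply_two_zero_and_one_eq_zero {m : Matrix (Fin 3) (Fin 3) ℂ} (hm : m ∈ Mset) :
    m 2 0 = 0 ∧ m 2 1 = 0 := by
  have h0 := congrFun (congrFun (hm.2 2) 2) 0
  have h1 := congrFun (congrFun (hm.2 2) 2) 1
  simp only [amat, mul_apply, of_apply, cons_val', cons_val_zero, cons_val_one, cons_val,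
    cons_val_fin_one, Fin.sum_univ_three, mul_zero, zero_mul, add_zero, zero_add, mul_one] at h0 h1
  have he : (Real.exp (2 / 2) : ℂ) ≠ Real.exp (-2 / 2) :=
    ofReal_injective.ne (Real.exp_lt_exp.2 (by norm_num)).ne'
  have he' : (1 : ℂ) ≠ Real.exp (-2 / 2) :=
    ofReal_one ▸ ofReal_injective.ne (Real.exp_lt_one_iff.2 (by norm_num)).ne'
  exact ⟨(mul_eq_zero.1 (by linear_combination h0)).resolve_left (sub_ne_zero.2 he),
    (mul_eq_zero.1 (by linear_combination h1)).resolve_left (sub_ne_zero.2 he')⟩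

theorem exists_ne_zero_apply_two_eq_mul {n₀ m : Matrix (Fin 3) (Fin 3) ℂ} (hn₀ : n₀ ∈ Nset)
    (hm : m ∈ Mset) (t₀ : ℝ) (k : Matrix (Fin 3) (Fin 3) ℂ) :
    ∃ c : ℂ, c ≠ 0 ∧ ∀ j, (n₀ * amat t₀ * m * k) 2 j = c * k 2 j := by
  obtain ⟨z, τ, rfl⟩ := hn₀
  obtain ⟨hm20, hm21⟩ := Mset_apply_two_zero_and_one_eq_zero hm
  have hm22 : normSq (m 2 2) = 1 := by
    simpa [Fin.sum_univ_three, hm20, hm21] using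
      sum_normSq_apply_of_conjTranspose_mul_self_eq_one hm.1.2 2
  refine ⟨Real.exp (-t₀ / 2) * m 2 2, mul_ne_zero (by exact_mod_cast (Real.exp_pos _).ne')
    (normSq_pos.1 (hm22 ▸ one_pos)), fun j => ?_⟩
  rw [Matrix.mul_assoc, nmat_mul_amat_mul_apply_two, mul_apply]
  simp [Fin.sum_univ_three, hm20, hm21, mul_assoc]

theorem sum_normSq_kmat_apply_two {α β : ℂ} (hαβ : normSq α + normSq β = 1) :
    ∑ j, normSq (kmat α β 2 j) = 1 := by
  simp only [Fin.sum_univ_three, kmat, of_apply, cons_val', cons_val, normSq_div, normSq_sub,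
    normSq_add, map_one, mul_one, normSq_ofNat, normSq_ofReal, Nat.ofNat_nonneg,
    Real.mul_self_sqrt]
  linear_combination hαβ / 2

theorem mul_apply_eq_mul_of_apply_eq {l m n R : Type*} [Fintype m] [Semiring R]
    {g k : Matrix l m R} {c : R} {i : l} (h : ∀ j, g i j = c * k i j) (X : Matrix m n R) (j : n) :
    (g * X) i j = c * (k * X) i j := by
  simp only [mul_apply, h, Finset.mul_sum, mul_assoc]

theorem hasDerivAt_sum_normSq_mul_apply {ι : Type*} [Fintype ι] (g : Matrix ι ι ℂ)
    {X : ℝ → Matrix ι ι ℂ} {X' : Matrix ι ι ℂ} {s₀ : ℝ}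
    (hX : ∀ i j, HasDerivAt (fun s => X s i j) (X' i j) s₀) (i : ι) :
    HasDerivAt (fun s => ∑ j, normSq ((g * X s) i j))
      (∑ j, 2 * ((g * X') i j * conj ((g * X s₀) i j)).re) s₀ := by
  refine HasDerivAt.fun_sum fun j _ => ?_
  have hentry : HasDerivAt (fun s => (g * X s) i j) ((g * X') i j) s₀ := by
    simp only [mul_apply]
    exact HasDerivAt.fun_sum fun l _ => (hX l j).const_mul (g i l)
  simpa only [normSq_eq_norm_sq, Complex.inner] using hentry.norm_sq

theorem deriv_AA_mul (AA : Matrix (Fin 3) (Fin 3) ℂ → ℝ)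
    (κ : Matrix (Fin 3) (Fin 3) ℂ → Matrix (Fin 3) (Fin 3) ℂ)
    (hdec : ∀ g ∈ U21, κ g ∈ K0 ∧ ∃ n ∈ Nset, g = n * amat (AA g) * κ g)
    {g k : Matrix (Fin 3) (Fin 3) ℂ} {c : ℂ} (hg : g ∈ U21) (hc : c ≠ 0)
    (hgk : ∀ j, g 2 j = c * k 2 j) (hk : ∑ j, normSq (k 2 j) = 1)
    {X : ℝ → Matrix (Fin 3) (Fin 3) ℂ} {X' : Matrix (Fin 3) (Fin 3) ℂ} (hXU : ∀ s, X s ∈ U21)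
    (hX0 : X 0 = 1) (hX : ∀ i j, HasDerivAt (fun s => X s i j) (X' i j) 0) :
    deriv (fun s => AA (g * X s)) 0 = -∑ j, 2 * ((k * X') 2 j * conj (k 2 j)).re := by
  have hAA : (fun s => AA (g * X s)) = fun s => -Real.log (∑ j, normSq ((g * X s) 2 j)) :=
    funext fun s => AA_eq_neg_log_sum_normSq AA κ hdec (mul_mem_U21 hg (hXU s))
  have hS0 : ∑ j, normSq ((g * X 0) 2 j) = normSq c := by
    simp_rw [hX0, Matrix.mul_one, hgk, normSq_mul, ← Finset.mul_sum, hk, mul_one]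
  have hS := hasDerivAt_sum_normSq_mul_apply g hX 2
  rw [hAA, ((hS.log (hS0 ▸ normSq_pos.2 hc).ne').fun_neg).deriv, hS0]
  simp_rw [hX0, Matrix.mul_one, mul_apply_eq_mul_of_apply_eq hgk, hgk, map_mul]
  have hfactor (a b : ℂ) : c * a * (conj c * b) = normSq c * (a * b) := by
    rw [← mul_conj]; ring
  simp_rw [hfactor, re_ofReal_mul, mul_left_comm (2 : ℝ), ← Finset.mul_sum,
    mul_div_cancel_left₀ _ (normSq_pos.2 hc).ne']

def amatDeriv : Matrix (Fin 3) (Fin 3) ℂ := !![1 / 2, 0, 0; 0, 0, 0; 0, 0, -1 / 2]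

def nmatDeriv (w : ℂ) (σ : ℝ) : Matrix (Fin 3) (Fin 3) ℂ :=
  !![0, √2 * w, σ * I; 0, 0, -(√2 * conj w); 0, 0, 0]

theorem hasDerivAt_amat_apply (i j : Fin 3) :
    HasDerivAt (fun t => amat t i j) (amatDeriv i j) 0 := by
  fin_cases i <;> fin_cases j <;> simp [amat, amatDeriv, -ofReal_exp]
  all_goals first
    | exact hasDerivAt_const _ _
    | simpa using ((hasDerivAt_id (0 : ℝ)).div_const 2).exp.ofReal_comp
    | simpa [neg_div] using ((hasDerivAt_id (0 : ℝ)).div_const 2).neg.exp.ofReal_comp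

theorem hasDerivAt_nmat_apply (w : ℂ) (σ : ℝ) (i j : Fin 3) :
    HasDerivAt (fun s : ℝ => nmat (s * w) (s * σ) i j) (nmatDeriv w σ i j) 0 := by
  have hs : HasDerivAt (fun s : ℝ => (s : ℂ)) 1 0 := by
    simpa using (hasDerivAt_id (0 : ℝ)).ofReal_comp
  fin_cases i <;> fin_cases j <;> simp [nmat, nmatDeriv]
  all_goals first
    | exact hasDerivAt_const _ _
    | simpa using (hs.mul_const w).const_mul (√2 : ℂ)
    | simpa using ((hs.mul_const (conj w)).const_mul (√2 : ℂ)).fun_neg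
    | simpa [mul_assoc] using
        (hs.mul_const (σ * I)).fun_sub ((hs.fun_mul hs).mul_const (normSq w : ℂ))

theorem neg_sum_re_kmat_mul_amatDeriv (α β : ℂ) :
    -∑ j, 2 * ((kmat α β * amatDeriv) 2 j * conj (kmat α β 2 j)).re = α.re := by
  simp [kmat, amatDeriv, mul_apply, Fin.sum_univ_three]
  ring

theorem neg_sum_re_kmat_mul_nmatDeriv (α β w : ℂ) (σ : ℝ) :
    -∑ j, 2 * ((kmat α β * nmatDeriv w σ) 2 j * conj (kmat α β 2 j)).re
      = 2 * (w * conj β).re + σ * α.im := by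
  have h2 : (√2 : ℝ) ≠ 0 := by positivity
  simp [kmat, nmatDeriv, mul_apply, Fin.sum_univ_three]
  field_simp
  ring

theorem derivatives_of_A_projection_general
    (AA : Matrix (Fin 3) (Fin 3) ℂ → ℝ)
    (κ : Matrix (Fin 3) (Fin 3) ℂ → Matrix (Fin 3) (Fin 3) ℂ)
    (hdec : ∀ g ∈ U21, κ g ∈ K0 ∧ ∃ n ∈ Nset, g = n * amat (AA g) * κ g)
    (g : Matrix (Fin 3) (Fin 3) ℂ) (n₀ m : Matrix (Fin 3) (Fin 3) ℂ) (t₀ : ℝ) (α β : ℂ)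
    (hg : g ∈ U21) (hn₀ : n₀ ∈ Nset) (hm : m ∈ Mset) (hαβ : normSq α + normSq β = 1)
    (hdecg : g = n₀ * amat t₀ * m * kmat α β) :
    deriv (fun t : ℝ => AA (g * amat t)) 0 = α.re ∧
    deriv (fun τ : ℝ => AA (g * nmat 0 τ)) 0 = α.im ∧
    deriv (fun x : ℝ => AA (g * nmat (x : ℂ) 0)) 0 = 2 * β.re ∧
    deriv (fun y : ℝ => AA (g * nmat ((y : ℂ) * I) 0)) 0 = 2 * β.im := by
  obtain ⟨c, hc, hgk⟩ := exists_ne_zero_apply_two_eq_mul hn₀ hm t₀ (kmat α β)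
  rw [← hdecg] at hgk
  have hk := sum_normSq_kmat_apply_two hαβ
  have hnmat (w : ℂ) (σ : ℝ) :
      deriv (fun s : ℝ => AA (g * nmat (s * w) (s * σ))) 0 = 2 * (w * conj β).re + σ * α.im := by
    rw [deriv_AA_mul AA κ hdec hg hc hgk hk (fun s => nmat_mem_U21 _ _)
      (by simp [nmat_zero_zero]) (hasDerivAt_nmat_apply w σ), neg_sum_re_kmat_mul_nmatDeriv]
  refine ⟨?_, by simpa using hnmat 0 1, by simpa using hnmat 1 0, by simpa using hnmat I 0⟩
  rw [deriv_AA_mul AA κ hdec hg hc hgk hk amat_mem_U21 amat_zero hasDerivAt_amat_apply,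
    neg_sum_re_kmat_mul_amatDeriv]

theorem derivatives_of_A_projection
    (AA : Matrix (Fin 3) (Fin 3) ℂ → ℝ)
    (κ : Matrix (Fin 3) (Fin 3) ℂ → Matrix (Fin 3) (Fin 3) ℂ)
    (hdec : ∀ g ∈ U21, κ g ∈ K0 ∧ ∃ n ∈ Nset, g = n * amat (AA g) * κ g)
    (huniq : ∀ n ∈ Nset, ∀ n' ∈ Nset, ∀ (t t' : ℝ), ∀ k ∈ K0, ∀ k' ∈ K0,
      n * amat t * k = n' * amat t' * k' → t = t' ∧ k = k')
    (g : Matrix (Fin 3) (Fin 3) ℂ) (n₀ m : Matrix (Fin 3) (Fin 3) ℂ) (t₀ : ℝ) (α β : ℂ)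
    (hg : g ∈ U21) (hn₀ : n₀ ∈ Nset) (hm : m ∈ Mset) (hαβ : normSq α + normSq β = 1)
    (hdecg : g = n₀ * amat t₀ * m * kmat α β) :
    deriv (fun t : ℝ => AA (g * amat t)) 0 = α.re ∧
    deriv (fun τ : ℝ => AA (g * nmat 0 τ)) 0 = α.im ∧
    deriv (fun x : ℝ => AA (g * nmat (x : ℂ) 0)) 0 = 2 * β.re ∧
    deriv (fun y : ℝ => AA (g * nmat ((y : ℂ) * I) 0)) 0 = 2 * β.im :=
  derivatives_of_A_projection_general AA κ hdec g n₀ m t₀ α β hg hn₀ hm hαβ hdecg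

end
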